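/- With the same setup, if r_t = h then the Hessian of c_v with respect to x_t also vanishes: Hess_{x_t} c_v = 0. Consequently c_v extends to a C² function of x_t across the hard-cutoff boundary, where for r_t > h the neighbor t is excluded from the sum. -/

import Mathlib

open Real

/-- The logistic sigmoid `S(x) = 1/(1 + e^{-x})`. -/
noncomputable def sigmoid : ℝ → ℝ := fun x => 1 / (1 + Real.exp (-x))

/-- The polynomial envelope `p(x) = 1 - ((n+1)(n+2)/2)xⁿ + n(n+2)xⁿ⁺¹ - (n(n+1)/2)xⁿ⁺²`. -/
noncomputable def polyEnvelope (n : ℕ) : ℝ → ℝ := fun x =>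
  1 - ((n + 1) * (n + 2) / 2) * x ^ n + (n * (n + 2)) * x ^ (n + 1)
    - (n * (n + 1) / 2) * x ^ (n + 2)

/-- The Gaussian weighting function (normal PDF with mean `μ` and std `σ`). -/
noncomputable def gaussWeight (μ σ : ℝ) : ℝ → ℝ := fun x =>
  (1 / (σ * Real.sqrt (2 * π))) * Real.exp (-(1 / 2) * ((x - μ) / σ) ^ 2)

variable {ι : Type*} [DecidableEq ι]

/-- Distance of neighbor `u` from the center atom `xv`, where the position of the
distinguished neighbor `t` is the variable `xt` and all other positions are given by `pos`. -/
noncomputable def nbrDist (d : ℕ) (t : ι) (pos : ι → EuclideanSpace ℝ (Fin d))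
    (xv : EuclideanSpace ℝ (Fin d)) (xt : EuclideanSpace ℝ (Fin d)) (u : ι) : ℝ :=
  if u = t then ‖xt - xv‖ else ‖pos u - xv‖

/-- The soft rank `R_u` of neighbor `u`, as a function of the position `xt` of neighbor `t`. -/
noncomputable def softRank (d : ℕ) (N : Finset ι) (t : ι) (pos : ι → EuclideanSpace ℝ (Fin d))
    (xv : EuclideanSpace ℝ (Fin d)) (α h : ℝ) (n : ℕ)
    (xt : EuclideanSpace ℝ (Fin d)) (u : ι) : ℝ :=
  ∑ s ∈ N.erase u, _root_.sigmoid (α * (nbrDist d t pos xv xt u - nbrDist d t pos xv xt s)) *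
    polyEnvelope n (nbrDist d t pos xv xt s / h)

/-- The dynamic cutoff `c_v`, as a function of the position `xt` of neighbor `t`. -/
noncomputable def dynCutoff (d : ℕ) (N : Finset ι) (t : ι) (pos : ι → EuclideanSpace ℝ (Fin d))
    (xv : EuclideanSpace ℝ (Fin d)) (α h ε μ σ : ℝ) (n : ℕ)
    (xt : EuclideanSpace ℝ (Fin d)) : ℝ :=
  (∑ u ∈ N, gaussWeight μ σ (softRank d N t pos xv α h n xt u) *
      polyEnvelope n (nbrDist d t pos xv xt u / h) * nbrDist d t pos xv xt u + h * ε) /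
  (∑ u ∈ N, gaussWeight μ σ (softRank d N t pos xv α h n xt u) *
      polyEnvelope n (nbrDist d t pos xv xt u / h) + ε)


/-!
Write the cutoff as a function of the distances `r u` and weights `w u = p (r u / h)`. The hard
cutoff is the same formula with the weight of `t` replaced by `p̃ (r t / h)`, where `p̃` is `p` on
`(-∞, 1]` and `0` beyond: a zero weight removes `t` from every sum. Since
`p' x = -(n (n + 1) (n + 2) / 2) x ^ (n - 1) (1 - x) ^ 2`, `p` vanishes to third order at `1`, so
`p̃` is `C²` and the glued cutoff is `C²` away from `xv`. It agrees with `c_v` on the open ball of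
radius `h` and is constant off the closed ball, so at a point of the sphere the (continuous)
Hessians of `c_v`, of the glued cutoff and of a constant all coincide.
-/

open Set

theorem continuous_ite_le_zero {M : Type*} [TopologicalSpace M] [Zero M] {f : ℝ → M} {b : ℝ}
    (hf : Continuous f) (hb : f b = 0) :
    Continuous fun x => if x ≤ b then f x else 0 :=
  hf.if_le continuous_const continuous_id continuous_const fun _ hx => hx ▸ hb

section glue

variable {F : Type*} [NormedAddCommGroup F] [NormedSpace ℝ F]

theorem hasDerivAt_ite_le_zero_of_ne {f : ℝ → F} {b x : ℝ} (hf : Differentiable ℝ f)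
    (hx : x ≠ b) :
    HasDerivAt (fun y => if y ≤ b then f y else 0) (if x ≤ b then deriv f x else 0) x := by
  rcases hx.lt_or_gt with hlt | hgt
  · rw [if_pos hlt.le]
    refine (hf x).hasDerivAt.congr_of_eventuallyEq ?_
    filter_upwards [Iio_mem_nhds hlt] with y hy
    exact if_pos (le_of_lt hy)
  · rw [if_neg hgt.not_ge]
    refine (hasDerivAt_const x (0 : F)).congr_of_eventuallyEq ?_
    filter_upwards [Ioi_mem_nhds hgt] with y hy
    exact if_neg (not_le.2 hy)

theorem contDiff_ite_le_zero {k : ℕ} {f : ℝ → F} {b : ℝ} (hf : ContDiff ℝ k f)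
    (hb : ∀ j ≤ k, iteratedDeriv j f b = 0) :
    ContDiff ℝ k fun x => if x ≤ b then f x else 0 := by
  induction k generalizing f with
  | zero =>
    simpa using continuous_ite_le_zero hf.continuous (by simpa using hb 0 le_rfl)
  | succ k ih =>
    rw [Nat.cast_add, Nat.cast_one, contDiff_succ_iff_deriv] at hf ⊢
    obtain ⟨hdiff, -, hderiv⟩ := hf
    have hderiv_glue : ∀ x, HasDerivAt (fun y => if y ≤ b then f y else 0)
        (if x ≤ b then deriv f x else 0) x :=
      hasDerivAt_of_hasDerivAt_of_ne' (fun y hy => hasDerivAt_ite_le_zero_of_ne hdiff hy)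
        (continuous_ite_le_zero hdiff.continuous (by simpa using hb 0 (Nat.zero_le _))).continuousAt
        (continuous_ite_le_zero hderiv.continuous (by simpa using hb 1 (by omega))).continuousAt
    refine ⟨fun x => (hderiv_glue x).differentiableAt, by simp, ?_⟩
    rw [show deriv (fun y => if y ≤ b then f y else 0) = _ from
      funext fun x => (hderiv_glue x).deriv]
    exact ih hderiv fun j hj => by rw [← iteratedDeriv_succ']; exact hb (j + 1) (by omega)

end glue

theorem hasDerivAt_polyEnvelope (n : ℕ) (x : ℝ) :
    HasDerivAt (polyEnvelope n) (-(n * (n + 1) * (n + 2) / 2) * x ^ (n - 1) * (1 - x) ^ 2) x := by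
  unfold polyEnvelope
  refine ((((hasDerivAt_const x (1 : ℝ)).sub ((hasDerivAt_pow n x).const_mul _)).add
    ((hasDerivAt_pow (n + 1) x).const_mul _)).sub
      ((hasDerivAt_pow (n + 2) x).const_mul _)).congr_deriv ?_
  rcases n with _ | m
  · simp
  · simp only [Nat.add_sub_cancel]
    push_cast
    ring

theorem deriv_polyEnvelope (n : ℕ) :
    deriv (polyEnvelope n) =
      fun x : ℝ => -((n : ℝ) * (n + 1) * (n + 2) / 2) * x ^ (n - 1) * (1 - x) ^ 2 :=
  funext fun x => (hasDerivAt_polyEnvelope n x).deriv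

theorem polyEnvelope_one (n : ℕ) : polyEnvelope n 1 = 0 := by
  simp only [polyEnvelope]
  ring

theorem contDiff_polyEnvelope (n : ℕ) {k : WithTop ℕ∞} : ContDiff ℝ k (polyEnvelope n) := by
  unfold polyEnvelope
  fun_prop

theorem iteratedDeriv_polyEnvelope_one {n j : ℕ} (hj : j ≤ 2) :
    iteratedDeriv j (polyEnvelope n) 1 = 0 := by
  interval_cases j
  · simpa using polyEnvelope_one n
  · simp [deriv_polyEnvelope]
  · have h : HasDerivAt
        (fun x : ℝ => -((n : ℝ) * (n + 1) * (n + 2) / 2) * x ^ (n - 1) * (1 - x) ^ 2) 0 1 := by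
      refine (((hasDerivAt_pow (n - 1) (1 : ℝ)).const_mul _).mul
        (((hasDerivAt_id' (1 : ℝ)).const_sub 1).pow 2)).congr_deriv ?_
      simp
    rw [iteratedDeriv_succ, iteratedDeriv_one, deriv_polyEnvelope]
    exact h.deriv

theorem polyEnvelope_nonneg (n : ℕ) {x : ℝ} (h0 : 0 ≤ x) (h1 : x ≤ 1) :
    0 ≤ polyEnvelope n x := by
  have hanti : AntitoneOn (polyEnvelope n) (Ici 0) := by
    have hdiff := (contDiff_polyEnvelope n (k := 1)).differentiable one_ne_zero
    refine antitoneOn_of_deriv_nonpos (convex_Ici 0) hdiff.continuous.continuousOn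
      hdiff.differentiableOn fun y hy => ?_
    rw [interior_Ici] at hy
    rw [deriv_polyEnvelope]
    have hy0 : 0 ≤ y := hy.out.le
    have : 0 ≤ (n * (n + 1) * (n + 2) / 2 : ℝ) * y ^ (n - 1) * (1 - y) ^ 2 := by positivity
    linarith
  simpa [polyEnvelope_one] using hanti (mem_Ici.2 h0) (mem_Ici.2 zero_le_one) h1

theorem sigmoid_eq_real_sigmoid : _root_.sigmoid = Real.sigmoid :=
  funext fun _ => one_div _

theorem contDiff_gaussWeight (μ σ : ℝ) {k : WithTop ℕ∞} : ContDiff ℝ k (gaussWeight μ σ) := by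
  unfold gaussWeight
  fun_prop

theorem gaussWeight_pos (μ : ℝ) {σ : ℝ} (hσ : 0 < σ) (x : ℝ) : 0 < gaussWeight μ σ x := by
  unfold gaussWeight
  have : 0 < √(2 * π) := Real.sqrt_pos.2 (by positivity)
  positivity

noncomputable def cutEnvelope (n : ℕ) (x : ℝ) : ℝ :=
  if x ≤ 1 then polyEnvelope n x else 0

theorem contDiff_cutEnvelope (n : ℕ) : ContDiff ℝ 2 (cutEnvelope n) :=
  contDiff_ite_le_zero (k := 2) (contDiff_polyEnvelope n) fun _ hj =>
    iteratedDeriv_polyEnvelope_one hj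

theorem cutEnvelope_nonneg (n : ℕ) {x : ℝ} (hx : 0 ≤ x) : 0 ≤ cutEnvelope n x := by
  unfold cutEnvelope
  split_ifs with h
  exacts [polyEnvelope_nonneg n hx h, le_rfl]

section weightedCutoff

variable (N : Finset ι) (α h ε μ σ : ℝ)

noncomputable def weightedRank (r w : ι → ℝ) (u : ι) : ℝ :=
  ∑ s ∈ N.erase u, _root_.sigmoid (α * (r u - r s)) * w s

noncomputable def weightedCutoff (r w : ι → ℝ) : ℝ :=
  (∑ u ∈ N, gaussWeight μ σ (weightedRank N α r w u) * w u * r u + h * ε) /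
    (∑ u ∈ N, gaussWeight μ σ (weightedRank N α r w u) * w u + ε)

variable {N α h ε μ σ}

theorem weightedCutoff_congr {r r' w w' : ι → ℝ} (hr : ∀ u ∈ N, r u = r' u)
    (hw : ∀ u ∈ N, w u = w' u) :
    weightedCutoff N α h ε μ σ r w = weightedCutoff N α h ε μ σ r' w' := by
  have hrank : ∀ u ∈ N, weightedRank N α r w u = weightedRank N α r' w' u := fun u hu =>
    Finset.sum_congr rfl fun s hs => by
      rw [hr u hu, hr s (Finset.mem_of_mem_erase hs), hw s (Finset.mem_of_mem_erase hs)]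
  unfold weightedCutoff
  congr 2 <;> refine Finset.sum_congr rfl fun u hu => ?_ <;>
    simp only [hrank u hu, hw u hu, hr u hu]

theorem weightedCutoff_erase_of_eq_zero {r w : ι → ℝ} {t : ι} (ht : w t = 0) :
    weightedCutoff (N.erase t) α h ε μ σ r w = weightedCutoff N α h ε μ σ r w := by
  have hrank : ∀ u, weightedRank (N.erase t) α r w u = weightedRank N α r w u := fun u => by
    unfold weightedRank
    rw [Finset.erase_right_comm]
    exact Finset.sum_erase _ (by simp [ht])
  unfold weightedCutoff
  simp only [hrank]
  rw [Finset.sum_erase _ (by simp [ht]), Finset.sum_erase _ (by simp [ht])]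

theorem ContDiffAt.weightedCutoff {E : Type*} [NormedAddCommGroup E] [NormedSpace ℝ E]
    {k : WithTop ℕ∞} {r w : ι → E → ℝ} {x : E} (hr : ∀ u, ContDiffAt ℝ k (r u) x)
    (hw : ∀ u, ContDiffAt ℝ k (w u) x) (hw₀ : ∀ u ∈ N, 0 ≤ w u x) (hσ : 0 < σ) (hε : 0 < ε) :
    ContDiffAt ℝ k (fun y => weightedCutoff N α h ε μ σ (fun u => r u y) (fun u => w u y)) x := by
  have hsigmoid : ContDiff ℝ k _root_.sigmoid :=
    sigmoid_eq_real_sigmoid ▸ contDiff_sigmoid.of_le le_top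
  have hgauss : ∀ u, ContDiffAt ℝ k
      (fun y => gaussWeight μ σ (weightedRank N α (fun u => r u y) (fun u => w u y) u)) x :=
    fun u => (contDiff_gaussWeight μ σ).contDiffAt.comp x <| ContDiffAt.sum fun s _ =>
      (hsigmoid.contDiffAt.comp x (contDiffAt_const.mul ((hr u).sub (hr s)))).mul (hw s)
  refine ContDiffAt.div
    ((ContDiffAt.sum fun u _ => ((hgauss u).mul (hw u)).mul (hr u)).add contDiffAt_const)
    ((ContDiffAt.sum fun u _ => (hgauss u).mul (hw u)).add contDiffAt_const) ?_
  exact (add_pos_of_nonneg_of_pos (Finset.sum_nonneg fun u hu =>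
    mul_nonneg (gaussWeight_pos μ hσ _).le (hw₀ u hu)) hε).ne'

end weightedCutoff

theorem fderiv_fderiv_eq_of_eqOn {𝕜 E F : Type*} [NontriviallyNormedField 𝕜]
    [NormedAddCommGroup E] [NormedSpace 𝕜 E] [NormedAddCommGroup F] [NormedSpace 𝕜 F]
    {f g : E → F} {U : Set E} {x : E} (hf : ContDiffAt 𝕜 2 f x) (hg : ContDiffAt 𝕜 2 g x)
    (hU : IsOpen U) (hfg : EqOn f g U) (hx : x ∈ closure U) :
    fderiv 𝕜 (fderiv 𝕜 f) x = fderiv 𝕜 (fderiv 𝕜 g) x := by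
  have hcont : ∀ {φ : E → F}, ContDiffAt 𝕜 2 φ x → ContinuousAt (fderiv 𝕜 (fderiv 𝕜 φ)) x :=
    fun hφ => ((hφ.fderiv_right (m := 1) le_rfl).fderiv_right (m := 0) le_rfl).continuousAt
  have heq : EqOn (fderiv 𝕜 (fderiv 𝕜 f)) (fderiv 𝕜 (fderiv 𝕜 g)) U := fun y hy =>
    (hfg.eventuallyEq_of_mem (hU.mem_nhds hy)).fderiv.fderiv_eq
  have := mem_closure_iff_nhdsWithin_neBot.1 hx
  exact tendsto_nhds_unique_of_eventuallyEq ((hcont hf).mono_left nhdsWithin_le_nhds)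
    ((hcont hg).mono_left nhdsWithin_le_nhds) (eventually_nhdsWithin_of_forall heq)

section nbrDist

variable {d : ℕ} {t : ι} {pos : ι → EuclideanSpace ℝ (Fin d)} {xv : EuclideanSpace ℝ (Fin d)}

theorem contDiffAt_nbrDist {k : WithTop ℕ∞} {x : EuclideanSpace ℝ (Fin d)} (hx : x ≠ xv)
    (u : ι) : ContDiffAt ℝ k (fun y => nbrDist d t pos xv y u) x := by
  unfold nbrDist
  split_ifs
  exacts [(contDiffAt_id.sub contDiffAt_const).norm ℝ (sub_ne_zero.2 hx), contDiffAt_const]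

theorem nbrDist_nonneg {xt : EuclideanSpace ℝ (Fin d)} {u : ι} :
    0 ≤ nbrDist d t pos xv xt u := by
  unfold nbrDist
  split_ifs <;> exact norm_nonneg _

theorem nbrDist_le {N : Finset ι} {h : ℝ} (hpos : ∀ u ∈ N, u ≠ t → ‖pos u - xv‖ ∈ Icc 0 h)
    {xt : EuclideanSpace ℝ (Fin d)} (hxt : ‖xt - xv‖ ≤ h) {u : ι} (hu : u ∈ N) :
    nbrDist d t pos xv xt u ≤ h := by
  unfold nbrDist
  split_ifs with hut
  exacts [hxt, (hpos u hu hut).2]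

end nbrDist

section dynCutoff

variable {d : ℕ} {N : Finset ι} {t : ι} {pos : ι → EuclideanSpace ℝ (Fin d)}
  {xv : EuclideanSpace ℝ (Fin d)} {α h ε μ σ : ℝ} {n : ℕ}

theorem dynCutoff_eq_weightedCutoff (xt : EuclideanSpace ℝ (Fin d)) :
    dynCutoff d N t pos xv α h ε μ σ n xt = weightedCutoff N α h ε μ σ (nbrDist d t pos xv xt)
      (fun u => polyEnvelope n (nbrDist d t pos xv xt u / h)) :=
  rfl

theorem dynCutoff_erase_self_eq (xt xt' : EuclideanSpace ℝ (Fin d)) :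
    dynCutoff d (N.erase t) t pos xv α h ε μ σ n xt =
      dynCutoff d (N.erase t) t pos xv α h ε μ σ n xt' := by
  have hdist : ∀ u ∈ N.erase t, nbrDist d t pos xv xt u = nbrDist d t pos xv xt' u :=
    fun u hu => by simp [nbrDist, Finset.ne_of_mem_erase hu]
  exact weightedCutoff_congr hdist fun u hu => by rw [hdist u hu]

theorem ite_dynCutoff_eq_weightedCutoff (hh : 0 < h)
    (hpos : ∀ u ∈ N, u ≠ t → ‖pos u - xv‖ ∈ Icc 0 h) (xt : EuclideanSpace ℝ (Fin d)) :
    (if ‖xt - xv‖ ≤ h then dynCutoff d N t pos xv α h ε μ σ n xt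
      else dynCutoff d (N.erase t) t pos xv α h ε μ σ n xt) =
      weightedCutoff N α h ε μ σ (nbrDist d t pos xv xt)
        (fun u => cutEnvelope n (nbrDist d t pos xv xt u / h)) := by
  have hcut : ∀ u, nbrDist d t pos xv xt u ≤ h →
      polyEnvelope n (nbrDist d t pos xv xt u / h) = cutEnvelope n (nbrDist d t pos xv xt u / h) :=
    fun u hu => (if_pos ((div_le_one hh).2 hu)).symm
  split_ifs with hxt
  · exact weightedCutoff_congr (fun _ _ => rfl) fun u hu => hcut u (nbrDist_le hpos hxt hu)
  · have hdist : ∀ u ∈ N.erase t, nbrDist d t pos xv xt u ≤ h := fun u hu => by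
      simpa [nbrDist, Finset.ne_of_mem_erase hu] using
        (hpos u (Finset.mem_of_mem_erase hu) (Finset.ne_of_mem_erase hu)).2
    have hzero : cutEnvelope n (nbrDist d t pos xv xt t / h) = 0 :=
      if_neg (not_le.2 (by simpa [nbrDist] using (one_lt_div hh).2 (not_le.1 hxt)))
    rw [← weightedCutoff_erase_of_eq_zero
      (w := fun u => cutEnvelope n (nbrDist d t pos xv xt u / h)) hzero]
    exact weightedCutoff_congr (fun _ _ => rfl) fun u hu => hcut u (hdist u hu)

end dynCutoff

theorem dynCutoff_hessian_vanishes_and_C2_extension_general (d : ℕ) (N : Finset ι) (t : ι)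
    (pos : ι → EuclideanSpace ℝ (Fin d)) (xv : EuclideanSpace ℝ (Fin d))
    (α h ε μ σ : ℝ) (n : ℕ) (hh : 0 < h) (hε : 0 < ε) (hσ : 0 < σ)
    (hpos : ∀ u ∈ N, u ≠ t → ‖pos u - xv‖ ∈ Set.Icc (0 : ℝ) h)
    (xt₀ : EuclideanSpace ℝ (Fin d)) (hrt : ‖xt₀ - xv‖ = h) :
    fderiv ℝ (fderiv ℝ (dynCutoff d N t pos xv α h ε μ σ n)) xt₀ = 0 ∧
      ContDiffOn ℝ 2
        (fun xt => if ‖xt - xv‖ ≤ h then dynCutoff d N t pos xv α h ε μ σ n xt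
          else dynCutoff d (N.erase t) t pos xv α h ε μ σ n xt)
        {x : EuclideanSpace ℝ (Fin d) | x ≠ xv} := by
  set G := fun xt => if ‖xt - xv‖ ≤ h then dynCutoff d N t pos xv α h ε μ σ n xt
    else dynCutoff d (N.erase t) t pos xv α h ε μ σ n xt
  have hG : ∀ x ≠ xv, ContDiffAt ℝ 2 G x := fun x hx => by
    simp only [G, ite_dynCutoff_eq_weightedCutoff hh hpos]
    exact ContDiffAt.weightedCutoff (contDiffAt_nbrDist hx)
      (fun u => (contDiff_cutEnvelope n).contDiffAt.comp x
        ((contDiffAt_nbrDist hx u).div_const h))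
      (fun u _ => cutEnvelope_nonneg n (div_nonneg nbrDist_nonneg hh.le)) hσ hε
  refine ⟨?_, fun x hx => (hG x hx).contDiffWithinAt⟩
  have hxt₀ : xt₀ ≠ xv := fun h₀ => hh.ne' (by simpa [h₀] using hrt.symm)
  have hc : ContDiffAt ℝ 2 (dynCutoff d N t pos xv α h ε μ σ n) xt₀ := by
    rw [funext dynCutoff_eq_weightedCutoff]
    exact ContDiffAt.weightedCutoff (contDiffAt_nbrDist hxt₀)
      (fun u => (contDiff_polyEnvelope n).contDiffAt.comp xt₀
        ((contDiffAt_nbrDist hxt₀ u).div_const h))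
      (fun u hu => polyEnvelope_nonneg n (div_nonneg nbrDist_nonneg hh.le)
        ((div_le_one hh).2 (nbrDist_le hpos hrt.le hu))) hσ hε
  calc fderiv ℝ (fderiv ℝ (dynCutoff d N t pos xv α h ε μ σ n)) xt₀
      = fderiv ℝ (fderiv ℝ G) xt₀ :=
        fderiv_fderiv_eq_of_eqOn hc (hG xt₀ hxt₀) Metric.isOpen_ball
          (fun x hx => (if_pos (mem_ball_iff_norm.1 hx).le).symm)
          (by rw [closure_ball xv hh.ne']; exact mem_closedBall_iff_norm.2 hrt.le)
    _ = fderiv ℝ (fderiv ℝ fun _ => dynCutoff d (N.erase t) t pos xv α h ε μ σ n xt₀) xt₀ :=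
        fderiv_fderiv_eq_of_eqOn (hG xt₀ hxt₀) contDiffAt_const
          Metric.isClosed_closedBall.isOpen_compl
          (fun x hx => (if_neg (by simpa [dist_eq_norm] using hx)).trans
            (dynCutoff_erase_self_eq x xt₀))
          (by rw [closure_compl, interior_closedBall xv hh.ne']; simp [dist_eq_norm, hrt])
    _ = 0 := by simp

theorem dynCutoff_hessian_vanishes_and_C2_extension (d : ℕ) (N : Finset ι) (t : ι) (ht : t ∈ N)
    (pos : ι → EuclideanSpace ℝ (Fin d)) (xv : EuclideanSpace ℝ (Fin d))
    (α h ε μ σ : ℝ) (n : ℕ) (hn : 3 ≤ n) (hα : 0 < α) (hh : 0 < h) (hε : 0 < ε) (hσ : 0 < σ)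
    (hpos : ∀ u ∈ N, u ≠ t → ‖pos u - xv‖ ∈ Set.Icc (0 : ℝ) h)
    (xt₀ : EuclideanSpace ℝ (Fin d)) (hxt : xt₀ ≠ xv) (hrt : ‖xt₀ - xv‖ = h) :
    fderiv ℝ (fderiv ℝ (dynCutoff d N t pos xv α h ε μ σ n)) xt₀ = 0 ∧
      ContDiffOn ℝ 2
        (fun xt => if ‖xt - xv‖ ≤ h then dynCutoff d N t pos xv α h ε μ σ n xt
          else dynCutoff d (N.erase t) t pos xv α h ε μ σ n xt)
        {x : EuclideanSpace ℝ (Fin d) | x ≠ xv} :=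
  dynCutoff_hessian_vanishes_and_C2_extension_general d N t pos xv α h ε μ σ n hh hε hσ hpos xt₀ hrt
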